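/- arXiv:1603.00808 — 2 statements merged into one kernel-verified Lean document; each statement's English description precedes it below -/
import Mathlib

section
/- Let P(t) = At + B be a nonconstant real affine function and let a < b. Denote ‖P‖ = max_{x ∈ [a,b]} |P(x)|. Then for any ε > 0, the Lebesgue measure of the set {t ∈ [a,b] : |P(t)| < ε‖P‖} is at most 2ε(b-a). -/
open MeasureTheory Set

/-!
A set of reals has measure at most its diameter, so it suffices to show `|s - t| ≤ 2ε(b - a)`
for two points of the set. Multiplying by `|A|`, this becomes `|P s - P t| ≤ 2ε |P b - P a|`,
an inequality between values of `P` on the segment `[P a, P b]` that are small compared with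
`max |P a| |P b|`: if `P` changes sign on `[a, b]` this maximum is at most `|P b - P a|`, and
otherwise the small values are confined to the end of the segment nearest `0`.
-/

lemma abs_sub_le_of_mem_uIcc_of_abs_le_mul_max {p q x y ε : ℝ} (hε : 0 ≤ ε)
    (hx : x ∈ uIcc p q) (hy : y ∈ uIcc p q)
    (hxε : |x| ≤ ε * max |p| |q|) (hyε : |y| ≤ ε * max |p| |q|) :
    |x - y| ≤ 2 * ε * |q - p| := by
  wlog hpq : p ≤ q generalizing p q
  · rw [abs_sub_comm q p]
    rw [uIcc_comm] at hx hy
    rw [max_comm] at hxε hyε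
    exact this hx hy hxε hyε (le_of_not_ge hpq)
  rw [uIcc_of_le hpq] at hx hy
  obtain ⟨hpx, hxq⟩ := hx
  obtain ⟨hpy, hyq⟩ := hy
  rw [abs_of_nonneg (sub_nonneg.2 hpq)]
  rw [abs_le] at hxε hyε ⊢
  rcases le_total (1 / 2) ε with hε_half | hε_half
  · constructor <;> nlinarith
  rcases le_total 0 p with hp | hp
  · rw [abs_of_nonneg hp, abs_of_nonneg (hp.trans hpq), max_eq_right hpq] at hxε hyε
    constructor <;> nlinarith
  rcases le_total 0 q with hq | hq
  · have hM : max |p| |q| ≤ q - p := by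
      rw [abs_of_nonpos hp, abs_of_nonneg hq]
      exact max_le (by linarith) (by linarith)
    constructor <;> nlinarith
  · rw [abs_of_nonpos hp, abs_of_nonpos hq, max_eq_left (neg_le_neg hpq)] at hxε hyε
    constructor <;> nlinarith

lemma affine_mem_uIcc_of_mem_Icc {A B a b s : ℝ} (hs : s ∈ Icc a b) :
    A * s + B ∈ uIcc (A * a + B) (A * b + B) := by
  rw [mem_uIcc]
  rcases le_total 0 A with hA | hA
  · exact Or.inl ⟨by nlinarith [hs.1], by nlinarith [hs.2]⟩
  · exact Or.inr ⟨by nlinarith [hs.2], by nlinarith [hs.1]⟩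

lemma abs_sub_le_of_abs_affine_lt {A B a b ε N s t : ℝ} (hε : 0 < ε)
    (hN : IsGreatest ((fun t => |A * t + B|) '' Icc a b) N)
    (hs : s ∈ Icc a b) (ht : t ∈ Icc a b)
    (hsε : |A * s + B| < ε * N) (htε : |A * t + B| < ε * N) :
    |s - t| ≤ 2 * ε * (b - a) := by
  rcases eq_or_ne A 0 with rfl | hA
  · -- A constant `P` is small somewhere on `[a, b]` only when `1 < ε`.
    have hε1 : 1 < ε := by
      have hBN : |0 * s + B| ≤ N := hN.2 ⟨s, hs, rfl⟩
      obtain ⟨r, -, hr⟩ := hN.1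
      simp only [zero_mul, zero_add] at hBN hsε hr
      nlinarith [abs_nonneg B]
    rw [abs_sub_le_iff]
    constructor <;> nlinarith [hs.1, hs.2, ht.1, ht.2]
  have hN_le_max : N ≤ max |A * a + B| |A * b + B| := by
    obtain ⟨r, hr, rfl⟩ := hN.1
    rcases mem_uIcc.1 (affine_mem_uIcc_of_mem_Icc (A := A) (B := B) hr) with h | h
    · exact abs_le_max_abs_abs h.1 h.2
    · exact (abs_le_max_abs_abs h.1 h.2).trans_eq (max_comm _ _)
  have key := abs_sub_le_of_mem_uIcc_of_abs_le_mul_max hε.le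
    (affine_mem_uIcc_of_mem_Icc hs) (affine_mem_uIcc_of_mem_Icc ht)
    (hsε.le.trans (mul_le_mul_of_nonneg_left hN_le_max hε.le))
    (htε.le.trans (mul_le_mul_of_nonneg_left hN_le_max hε.le))
  rw [show A * s + B - (A * t + B) = A * (s - t) by ring,
    show A * b + B - (A * a + B) = A * (b - a) by ring, abs_mul, abs_mul,
    abs_of_nonneg (sub_nonneg.2 (hs.1.trans hs.2))] at key
  exact le_of_mul_le_mul_left (by linarith) (abs_pos.2 hA)

theorem stmt0_general (A B a b ε N : ℝ) (hε : 0 < ε)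
    (hN : IsGreatest ((fun t => |A * t + B|) '' Set.Icc a b) N) :
    volume {t ∈ Set.Icc a b | |A * t + B| < ε * N} ≤ ENNReal.ofReal (2 * ε * (b - a)) :=
  calc volume {t ∈ Set.Icc a b | |A * t + B| < ε * N}
      ≤ Metric.ediam {t ∈ Set.Icc a b | |A * t + B| < ε * N} := Real.volume_le_diam _
    _ ≤ ENNReal.ofReal (2 * ε * (b - a)) :=
      Metric.ediam_le_of_forall_dist_le fun _ hs _ ht =>
        abs_sub_le_of_abs_affine_lt hε hN hs.1 ht.1 hs.2 ht.2

/-- If `P(t) = A·t + B` is a nonconstant affine function, `a < b`, and `N` is the maximum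
of `|P|` over `[a,b]`, then for any `ε > 0` the Lebesgue measure of
`{t ∈ [a,b] : |P(t)| < ε·N}` is at most `2ε(b-a)`. -/
theorem stmt0 (A B a b ε N : ℝ) (hAB : (A, B) ≠ (0, 0)) (hab : a < b) (hε : 0 < ε)
    (hN : IsGreatest ((fun t => |A * t + B|) '' Set.Icc a b) N) :
    volume {t ∈ Set.Icc a b | |A * t + B| < ε * N} ≤ ENNReal.ofReal (2 * ε * (b - a)) :=
  stmt0_general A B a b ε N hε hN
end

section
/- Let N = B ⋉ Z be a semidirect product where B is the group of upper triangular 2×2 real matrices with positive diagonal entries and determinant 1, acting on Z = ℝ by b·z = a²·z where a is the upper-left entry of b. Suppose N₁ is a closed subgroup of Z₁ = U·Z ≅ ℝ² (with U the unipotent upper-triangular group) containing U, and N₁ is invariant under conjugation by a non-unipotent element a₀ of N (an element of N not in U·Z). Then N₁ is connected. In particular, if N₁ contains a nontrivial element of Z then N₁ contains all of Z. -/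
lemma stmt6_key (N₁ : AddSubgroup (ℝ × ℝ)) (hclosed : IsClosed (N₁ : Set (ℝ × ℝ)))
    (hU : ∀ s : ℝ, (s, (0 : ℝ)) ∈ N₁)
    (T : (ℝ × ℝ) ≃ₗ[ℝ] (ℝ × ℝ))
    (hT : ∀ v ∈ N₁, T v ∈ N₁)
    (r : ℝ) (hr0 : 0 < r) (hr1 : r < 1) (hc : ∀ v : ℝ × ℝ, ‖T v‖ ≤ r * ‖v‖) :
    (∃ z : ℝ, z ≠ 0 ∧ ((0 : ℝ), z) ∈ N₁) → ∀ z : ℝ, ((0 : ℝ), z) ∈ N₁ := by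
  rintro ⟨z₀, hz₀, hmem⟩ z
  by_cases h1 : (T ((1 : ℝ), (0 : ℝ))).2 = 0
  · -- T preserves the x-axis; let L be the induced factor on the second coordinate
    set L : ℝ := (T ((0 : ℝ), (1 : ℝ))).2 with hL
    have hsnd : ∀ v : ℝ × ℝ, (T v).2 = L * v.2 := by
      intro v
      have hv : v = v.1 • ((1 : ℝ), (0 : ℝ)) + v.2 • ((0 : ℝ), (1 : ℝ)) := by
        simp [Prod.ext_iff]
      calc (T v).2 = (v.1 • T ((1:ℝ), (0:ℝ)) + v.2 • T ((0:ℝ), (1:ℝ))).2 := by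
            rw [← map_smul, ← map_smul, ← map_add, ← hv]
        _ = L * v.2 := by simp [h1]; ring
    have hLne : L ≠ 0 := by
      intro hL0
      obtain ⟨v, hv⟩ := T.surjective ((0 : ℝ), (1 : ℝ))
      have := hsnd v
      rw [hv, hL0] at this
      norm_num at this
    have hiter : ∀ n : ℕ, (⇑T)^[n] ((0 : ℝ), z₀) ∈ N₁ ∧
        ((⇑T)^[n] ((0 : ℝ), z₀)).2 = L ^ n * z₀ ∧
        ‖(⇑T)^[n] ((0 : ℝ), z₀)‖ ≤ r ^ n * ‖((0 : ℝ), z₀)‖ := by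
      intro n
      induction n with
      | zero => simpa using hmem
      | succ n ih =>
        obtain ⟨h1', h2', h3'⟩ := ih
        rw [Function.iterate_succ_apply']
        refine ⟨hT _ h1', ?_, ?_⟩
        · rw [hsnd, h2']; ring
        · calc ‖T ((⇑T)^[n] ((0:ℝ), z₀))‖ ≤ r * ‖(⇑T)^[n] ((0:ℝ), z₀)‖ := hc _
            _ ≤ r * (r ^ n * ‖((0:ℝ), z₀)‖) := by
                exact mul_le_mul_of_nonneg_left h3' hr0.le
            _ = r ^ (n + 1) * ‖((0:ℝ), z₀)‖ := by ring
    -- membership of the small elements (0, L^n z₀) in N₁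
    have hsmall : ∀ n : ℕ, ((0 : ℝ), L ^ n * z₀) ∈ N₁ := by
      intro n
      obtain ⟨h1', h2', _⟩ := hiter n
      have : ((0 : ℝ), L ^ n * z₀) =
          (⇑T)^[n] ((0 : ℝ), z₀) - (((⇑T)^[n] ((0 : ℝ), z₀)).1, 0) := by
        ext <;> simp [h2']
      rw [this]
      exact sub_mem h1' (hU _)
    -- S = second-coordinate subgroup
    set S : AddSubgroup ℝ := AddSubgroup.comap (AddMonoidHom.inr ℝ ℝ) N₁ with hS
    have hmemS : ∀ x : ℝ, x ∈ S ↔ ((0 : ℝ), x) ∈ N₁ := fun x => Iff.rfl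
    have hSclosed : IsClosed (S : Set ℝ) := by
      have : (S : Set ℝ) = (fun x : ℝ => ((0 : ℝ), x)) ⁻¹' (N₁ : Set (ℝ × ℝ)) := rfl
      rw [this]
      exact hclosed.preimage (Continuous.prodMk continuous_const continuous_id)
    rcases S.dense_or_cyclic with hdense | ⟨a, ha⟩
    · have : (S : Set ℝ) = Set.univ := hSclosed.closure_eq ▸ hdense.closure_eq
      exact (hmemS z).mp (by rw [← SetLike.mem_coe, this]; trivial)
    · exfalso
      have haz₀ : z₀ ∈ S := (hmemS z₀).mpr hmem
      have hane : a ≠ 0 := by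
        intro h0
        rw [h0] at ha
        have : z₀ ∈ AddSubgroup.closure ({0} : Set ℝ) := ha ▸ haz₀
        rw [AddSubgroup.closure_singleton_zero] at this
        exact hz₀ (by simpa using this)
      -- choose n with r^n * ‖(0,z₀)‖ < |a|
      have htend : Filter.Tendsto (fun n : ℕ => r ^ n * ‖((0:ℝ), z₀)‖) Filter.atTop (nhds 0) := by
        simpa using (tendsto_pow_atTop_nhds_zero_of_lt_one hr0.le hr1).mul_const ‖((0:ℝ), z₀)‖
      obtain ⟨n, hn⟩ := (htend.eventually (eventually_lt_nhds (abs_pos.mpr hane))).exists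
      -- the element (0, L^n z₀)
      have hmemn : L ^ n * z₀ ∈ S := (hmemS _).mpr (hsmall n)
      obtain ⟨h1', h2', h3'⟩ := hiter n
      have habs : |L ^ n * z₀| < |a| := by
        have := norm_snd_le ((⇑T)^[n] ((0 : ℝ), z₀))
        rw [h2'] at this
        calc |L ^ n * z₀| = ‖L ^ n * z₀‖ := rfl
          _ ≤ ‖(⇑T)^[n] ((0 : ℝ), z₀)‖ := this
          _ ≤ r ^ n * ‖((0:ℝ), z₀)‖ := h3'
          _ < |a| := hn
      rw [ha, AddSubgroup.mem_closure_singleton] at hmemn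
      obtain ⟨k, hk⟩ := hmemn
      have hk0 : k = 0 := by
        by_contra hk0
        have h1k : (1 : ℝ) ≤ |(k : ℝ)| := by
          rw [← Int.cast_abs]
          exact_mod_cast Int.one_le_abs (by simpa using hk0)
        rw [← hk, zsmul_eq_mul, abs_mul] at habs
        nlinarith [abs_nonneg a, abs_pos.mpr hane]
      rw [hk0] at hk
      simp at hk
      rcases hk with ⟨hk, -⟩ | hk
      · exact hLne hk
      · exact hz₀ hk
  · -- the image of the x-axis hits all second coordinates
    set w := T ((1 : ℝ), (0 : ℝ)) with hw
    set s : ℝ := z / w.2 with hs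
    have hsw : T ((s : ℝ), (0 : ℝ)) = s • w := by
      rw [hw, ← map_smul]
      norm_num
    have hmem2 : T ((s : ℝ), (0 : ℝ)) ∈ N₁ := hT _ (hU s)
    have hz2 : (T ((s : ℝ), (0 : ℝ))).2 = z := by
      rw [hsw]
      show s * w.2 = z
      rw [hs]
      field_simp
    have heq : ((0 : ℝ), z) = T ((s : ℝ), (0 : ℝ)) - ((T ((s : ℝ), (0 : ℝ))).1, 0) := by
      ext <;> simp [hz2]
    rw [heq]
    exact sub_mem hmem2 (hU _)

/-- Let `Z₁ = U·Z ≅ ℝ²` (with `U` the first coordinate line). Suppose `N₁` is a closed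
subgroup of `ℝ²` containing `U`, invariant under conjugation by a non-unipotent element,
i.e. under a linear automorphism `T` of `ℝ²` such that `T` or `T⁻¹` acts by contractions.
Then `N₁` is connected; in particular if `N₁` contains a nontrivial element of `Z` (the
second coordinate line) then it contains all of `Z`. -/
theorem stmt6 (N₁ : AddSubgroup (ℝ × ℝ)) (hclosed : IsClosed (N₁ : Set (ℝ × ℝ)))
    (hU : ∀ s : ℝ, (s, (0 : ℝ)) ∈ N₁)
    (T : (ℝ × ℝ) ≃ₗ[ℝ] (ℝ × ℝ))
    (hTinv : ∀ v ∈ N₁, T v ∈ N₁) (hTinv' : ∀ v ∈ N₁, T.symm v ∈ N₁)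
    (hcontr : (∃ r : ℝ, 0 < r ∧ r < 1 ∧ ∀ v : ℝ × ℝ, ‖T v‖ ≤ r * ‖v‖) ∨
              (∃ r : ℝ, 0 < r ∧ r < 1 ∧ ∀ v : ℝ × ℝ, ‖T.symm v‖ ≤ r * ‖v‖)) :
    IsConnected (N₁ : Set (ℝ × ℝ)) ∧
      ((∃ z : ℝ, z ≠ 0 ∧ ((0 : ℝ), z) ∈ N₁) → ∀ z : ℝ, ((0 : ℝ), z) ∈ N₁) := by
  have H : (∃ z : ℝ, z ≠ 0 ∧ ((0 : ℝ), z) ∈ N₁) → ∀ z : ℝ, ((0 : ℝ), z) ∈ N₁ := by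
    rcases hcontr with ⟨r, hr0, hr1, hc⟩ | ⟨r, hr0, hr1, hc⟩
    · exact stmt6_key N₁ hclosed hU T hTinv r hr0 hr1 hc
    · exact stmt6_key N₁ hclosed hU T.symm hTinv' r hr0 hr1 hc
  refine ⟨?_, H⟩
  by_cases hz : ∃ z : ℝ, z ≠ 0 ∧ ((0 : ℝ), z) ∈ N₁
  · have hall := H hz
    have : (N₁ : Set (ℝ × ℝ)) = Set.univ := by
      rw [Set.eq_univ_iff_forall]
      intro v
      have : v = (v.1, (0:ℝ)) + ((0:ℝ), v.2) := by ext <;> simp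
      rw [SetLike.mem_coe, this]
      exact add_mem (hU v.1) (hall v.2)
    rw [this]
    exact isConnected_univ
  · push_neg at hz
    have : (N₁ : Set (ℝ × ℝ)) = (fun x : ℝ => (x, (0:ℝ))) '' Set.univ := by
      ext v
      constructor
      · intro hv
        have h2 : ((0:ℝ), v.2) ∈ N₁ := by
          have : ((0:ℝ), v.2) = v - (v.1, (0:ℝ)) := by ext <;> simp
          rw [this]
          exact sub_mem hv (hU v.1)
        have hv2 : v.2 = 0 := by
          by_contra h
          exact (hz v.2 h) h2
        exact ⟨v.1, trivial, by ext <;> simp [hv2]⟩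
      · rintro ⟨x, -, rfl⟩
        exact hU x
    rw [this]
    exact isConnected_univ.image _ ((continuous_id.prodMk continuous_const).continuousOn)
end
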